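/- arXiv:1611.07120 — 6 statements merged into one kernel-verified Lean document; each statement's English description precedes it below -/
import Mathlib

section
/- A K×K integer matrix S (with K > 1) is a signed permutation matrix if and only if det(S) = 1 and the matrix |S| obtained by taking absolute values of the entries of S is a permutation matrix. -/
/-- The matrix of a transposition of `i` and `j`, with the offdiagonal `1` at
position `(j,i)` replaced by `-1`. -/
def signedTranspoMatrix {K : ℕ} (i j : Fin K) : Matrix (Fin K) (Fin K) ℤ :=
  Matrix.of fun k l =>
    if k = i ∧ l = j then 1
    else if k = j ∧ l = i then -1
    else if k = l ∧ k ≠ i ∧ k ≠ j then 1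
    else 0

/-- A signed transposition matrix: the matrix of a transposition with one of
the two offdiagonal `1`'s replaced by `-1`. -/
def IsSignedTransposition {K : ℕ} (S : Matrix (Fin K) (Fin K) ℤ) : Prop :=
  ∃ i j : Fin K, i ≠ j ∧ (S = signedTranspoMatrix i j ∨ S = signedTranspoMatrix j i)

/-- A signed permutation matrix: a (nonempty) product of signed transposition
matrices. -/
def IsSignedPermutation {K : ℕ} (S : Matrix (Fin K) (Fin K) ℤ) : Prop :=
  ∃ L : List (Matrix (Fin K) (Fin K) ℤ),
    L ≠ [] ∧ (∀ T ∈ L, IsSignedTransposition T) ∧ L.prod = S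

/-!
A signed permutation matrix is a monomial matrix `monomialMatrix σ ε`: row `k` has the single
nonzero entry `ε k = ±1`, in column `σ k`. These matrices form a monoid on which
`det = (∏ k, ε k) * sign σ`, so products of signed transpositions are monomial of
determinant `1`.
Conversely, peeling off one signed transposition for each swap in a factorisation of `σ` leaves
a diagonal sign matrix of determinant `1`, and such a matrix is a product of squares `T k p * T k p`
of signed transpositions, which are the diagonal matrices with `-1` exactly at `k` and at a fixed
pivot `p`. For `K > 1` the identity is the nonempty product `T 0 1 * T 1 0`.
-/

open Equiv Matrix

section Monomial

variable {ι R : Type*} [DecidableEq ι]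

def monomialMatrix [MonoidWithZero R] (σ : Perm ι) (ε : ι → Rˣ) : Matrix ι ι R :=
  Matrix.of fun k l => if σ k = l then (ε k : R) else 0

section Semiring

variable [Semiring R]

@[simp]
theorem monomialMatrix_one : monomialMatrix (1 : Perm ι) (1 : ι → Rˣ) = 1 := by
  ext k l
  by_cases h : k = l <;> simp [monomialMatrix, one_apply, h]

theorem monomialMatrix_mul [Fintype ι] (σ τ : Perm ι) (ε δ : ι → Rˣ) :
    monomialMatrix σ ε * monomialMatrix τ δ = monomialMatrix (τ * σ) (ε * δ ∘ σ) := by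
  ext k l
  simp only [monomialMatrix, mul_apply, of_apply, ite_mul, zero_mul, Finset.sum_ite_eq,
    Finset.mem_univ, if_true]
  by_cases h : τ (σ k) = l <;> simp [h]

theorem monomialMatrix_eq_diagonal_mul_permMatrix [Fintype ι] (σ : Perm ι) (ε : ι → Rˣ) :
    monomialMatrix σ ε = diagonal (fun k => (ε k : R)) * σ.permMatrix R := by
  ext k l
  simp [monomialMatrix, Perm.permMatrix, PEquiv.toMatrix_apply]

variable (ι R) in
def monomialMatrices [Fintype ι] : Submonoid (Matrix ι ι R) where
  carrier := {S | ∃ σ ε, monomialMatrix σ ε = S}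
  mul_mem' := by
    rintro _ _ ⟨σ, ε, rfl⟩ ⟨τ, δ, rfl⟩
    exact ⟨_, _, (monomialMatrix_mul σ τ ε δ).symm⟩
  one_mem' := ⟨1, 1, monomialMatrix_one⟩

end Semiring

theorem det_monomialMatrix [Fintype ι] [CommRing R] (σ : Perm ι) (ε : ι → Rˣ) :
    (monomialMatrix σ ε).det = (∏ k, (ε k : R)) * Perm.sign σ := by
  rw [monomialMatrix_eq_diagonal_mul_permMatrix, det_mul, det_diagonal, det_permutation]

theorem abs_monomialMatrix_apply (σ : Perm ι) (ε : ι → ℤˣ) (k l : ι) :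
    |monomialMatrix σ ε k l| = if σ k = l then 1 else 0 := by
  simp only [monomialMatrix, of_apply]
  split_ifs
  · exact Int.isUnit_iff_abs_eq.1 (ε k).isUnit
  · exact abs_zero

theorem exists_monomialMatrix_of_abs_eq {S : Matrix ι ι ℤ} {σ : Perm ι}
    (hS : ∀ k l, |S k l| = if σ k = l then 1 else 0) : ∃ ε, monomialMatrix σ ε = S := by
  have hunit k : IsUnit (S k (σ k)) := Int.isUnit_iff_abs_eq.2 (by simpa using hS k (σ k))
  refine ⟨fun k => (hunit k).unit, ?_⟩
  ext k l
  simp only [monomialMatrix, of_apply, IsUnit.unit_spec]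
  split_ifs with h
  · rw [h]
  · simpa [h, eq_comm] using hS k l

end Monomial

section SignedTransposition

variable {K : ℕ}

theorem signedTranspoMatrix_eq_monomialMatrix {i j : Fin K} (hij : i ≠ j) :
    signedTranspoMatrix i j = monomialMatrix (swap i j) (Pi.mulSingle j (-1)) := by
  ext k l
  simp only [signedTranspoMatrix, monomialMatrix, of_apply, swap_apply_def, Pi.mulSingle_apply,
    apply_ite Units.val, Units.val_one, Units.val_neg]
  split_ifs <;> grind

theorem det_signedTranspoMatrix {i j : Fin K} (hij : i ≠ j) :
    (signedTranspoMatrix i j).det = 1 := by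
  rw [signedTranspoMatrix_eq_monomialMatrix hij, det_monomialMatrix, ← Units.coe_prod,
    Fintype.prod_pi_mulSingle', Perm.sign_swap hij]
  simp

theorem signedTranspoMatrix_mul_self {i j : Fin K} (hij : i ≠ j) :
    signedTranspoMatrix i j * signedTranspoMatrix i j =
      monomialMatrix 1 (Pi.mulSingle i (-1) * Pi.mulSingle j (-1)) := by
  rw [signedTranspoMatrix_eq_monomialMatrix hij, monomialMatrix_mul, Equiv.swap_mul_self,
    Pi.mulSingle_comp_equiv, Equiv.symm_swap, swap_apply_right, mul_comm]

theorem signedTranspoMatrix_mul_signedTranspoMatrix {i j : Fin K} (hij : i ≠ j) :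
    signedTranspoMatrix i j * signedTranspoMatrix j i = 1 := by
  rw [signedTranspoMatrix_eq_monomialMatrix hij, signedTranspoMatrix_eq_monomialMatrix hij.symm,
    monomialMatrix_mul, Equiv.swap_comm, Equiv.swap_mul_self, Pi.mulSingle_comp_equiv,
    Equiv.symm_swap, swap_apply_left, ← Pi.mulSingle_mul, Int.units_mul_self, Pi.mulSingle_one,
    monomialMatrix_one]

theorem closure_signedTransposition_le :
    Submonoid.closure {T : Matrix (Fin K) (Fin K) ℤ | IsSignedTransposition T} ≤
      monomialMatrices (Fin K) ℤ ⊓ MonoidHom.mker detMonoidHom := by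
  refine Submonoid.closure_le.2 fun T ⟨i, j, hij, hT⟩ => ?_
  obtain ⟨a, b, hab, rfl⟩ : ∃ a b : Fin K, a ≠ b ∧ T = signedTranspoMatrix a b := by
    rcases hT with rfl | rfl
    exacts [⟨i, j, hij, rfl⟩, ⟨j, i, hij.symm, rfl⟩]
  exact ⟨⟨_, _, (signedTranspoMatrix_eq_monomialMatrix hab).symm⟩,
    det_signedTranspoMatrix hab⟩

theorem monomialMatrix_one_mem_closure (ε : Fin K → ℤˣ) (hε : ∏ k, ε k = 1) :
    monomialMatrix 1 ε ∈ Submonoid.closure {T | IsSignedTransposition T} := by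
  obtain _ | ⟨⟨p⟩⟩ := isEmpty_or_nonempty (Fin K)
  · exact Subsingleton.elim (1 : Matrix (Fin K) (Fin K) ℤ) (monomialMatrix 1 ε) ▸ one_mem _
  -- pair each sign with a pivot `p`; the signs collected at `p` multiply to `∏ k, ε k = 1`
  have hdecomp : ε = ∏ k, Pi.mulSingle k (ε k) * Pi.mulSingle p (ε k) := by
    rw [Finset.prod_mul_distrib, Finset.univ_prod_mulSingle]
    simp only [← MonoidHom.mulSingle_apply, ← map_prod, hε, map_one, mul_one]
  rw [hdecomp]
  refine Finset.prod_induction _ (fun δ => monomialMatrix 1 δ ∈ _) (fun δ δ' hδ hδ' => ?_)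
    (by simp [one_mem]) fun k _ => ?_
  · simpa [monomialMatrix_mul] using mul_mem hδ hδ'
  rcases Int.units_eq_one_or (ε k) with h | h
  · simp [h, one_mem]
  rcases eq_or_ne k p with rfl | hkp
  · simp [h, ← Pi.mulSingle_mul, one_mem]
  rw [h, ← signedTranspoMatrix_mul_self hkp]
  exact mul_mem (Submonoid.subset_closure ⟨k, p, hkp, Or.inl rfl⟩)
    (Submonoid.subset_closure ⟨k, p, hkp, Or.inl rfl⟩)

theorem monomialMatrix_mem_closure (σ : Perm (Fin K)) (ε : Fin K → ℤˣ)
    (hdet : (monomialMatrix σ ε).det = 1) :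
    monomialMatrix σ ε ∈ Submonoid.closure {T | IsSignedTransposition T} := by
  induction σ using Perm.swap_induction_on generalizing ε with
  | one =>
    refine monomialMatrix_one_mem_closure ε (Units.val_eq_one.1 ?_)
    simpa [det_monomialMatrix] using hdet
  | swap_mul f x y hxy ih =>
    have hsplit : monomialMatrix (swap x y * f) ε =
        monomialMatrix f (ε / Pi.mulSingle y (-1) ∘ f) * signedTranspoMatrix x y := by
      rw [signedTranspoMatrix_eq_monomialMatrix hxy, monomialMatrix_mul, div_mul_cancel]
    rw [hsplit] at hdet ⊢
    rw [det_mul, det_signedTranspoMatrix hxy, mul_one] at hdet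
    exact mul_mem (ih _ hdet) (Submonoid.subset_closure ⟨x, y, hxy, Or.inl rfl⟩)

theorem closure_signedTransposition_eq :
    Submonoid.closure {T : Matrix (Fin K) (Fin K) ℤ | IsSignedTransposition T} =
      monomialMatrices (Fin K) ℤ ⊓ MonoidHom.mker detMonoidHom := by
  refine le_antisymm closure_signedTransposition_le ?_
  rintro _ ⟨⟨σ, ε, rfl⟩, hdet⟩
  exact monomialMatrix_mem_closure σ ε hdet

theorem isSignedPermutation_iff_mem_closure (hK : 1 < K) (S : Matrix (Fin K) (Fin K) ℤ) :
    IsSignedPermutation S ↔ S ∈ Submonoid.closure {T | IsSignedTransposition T} := by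
  constructor
  · rintro ⟨L, -, hL, rfl⟩
    exact Submonoid.list_prod_mem _ fun T hT => Submonoid.subset_closure (hL T hT)
  intro hS
  obtain ⟨L, hL, rfl⟩ := Submonoid.exists_list_of_mem_closure hS
  rcases eq_or_ne L [] with rfl | hne
  · have h01 : (⟨0, by omega⟩ : Fin K) ≠ ⟨1, hK⟩ := by simp
    refine ⟨[signedTranspoMatrix _ _, signedTranspoMatrix _ _], by simp, ?_,
      (List.prod_pair ..).trans (signedTranspoMatrix_mul_signedTranspoMatrix h01)⟩
    simp only [List.mem_cons, List.not_mem_nil, or_false]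
    rintro T (rfl | rfl)
    exacts [⟨_, _, h01, Or.inl rfl⟩, ⟨_, _, h01, Or.inr rfl⟩]
  · exact ⟨L, hne, hL, rfl⟩

end SignedTransposition

/-- For `K > 1`, a `K×K` integer matrix `S` is a signed permutation matrix iff
`det S = 1` and the entrywise absolute value `|S|` is a permutation matrix. -/
theorem stmt_5 (K : ℕ) (hK : 1 < K) (S : Matrix (Fin K) (Fin K) ℤ) :
    IsSignedPermutation S ↔
      S.det = 1 ∧ ∃ σ : Equiv.Perm (Fin K),
        ∀ k l : Fin K, |S k l| = if σ k = l then 1 else 0 := by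
  rw [isSignedPermutation_iff_mem_closure hK, closure_signedTransposition_eq]
  constructor
  · rintro ⟨⟨σ, ε, rfl⟩, hdet⟩
    exact ⟨hdet, σ, abs_monomialMatrix_apply σ ε⟩
  · rintro ⟨hdet, σ, hσ⟩
    obtain ⟨ε, rfl⟩ := exists_monomialMatrix_of_abs_eq hσ
    exact ⟨⟨σ, ε, rfl⟩, hdet⟩
end

section
/- Let E be a directed graph with finitely many vertices, let u and v be distinct vertices with at least one edge from u to v, and suppose u supports a loop. Let F be the graph obtained from E by the column addition B_F = B_E · E_{u,v} (where E_{u,v} is the elementary matrix adding column u to column v of B_E = A_E − I). Then for all vertices w, w' of E, there exists a path from w to w' in E if and only if there exists a path from w to w' in F. -/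
/-- The one-step edge relation of a directed graph with edge set `E`,
source map `s` and range map `r`. -/
def gStep {V E : Type} (s r : E → V) : V → V → Prop :=
  fun x y => ∃ e : E, s e = x ∧ r e = y

/-!
Every edge of `E` other than `f` is an edge of `F`, and `f : u → v` is replaced in `F` by the
edge `ē : u → v` coming from a loop `e` at `u`. Conversely, each new edge `ē : s(e) → v` is
traced in `E` by the path `e f` through `u`. So each graph's one-step relation lies in the
other's reachability relation, and the two reachability relations coincide.
-/

/-- One-step relation of the graph `F` with `B_F = B_E · E_{u,v}`, built at the edge `f : u → v`. -/
def columnAddStep {V E : Type} (s r : E → V) (f : E) (u v : V) : V → V → Prop :=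
  fun x y => (∃ e : E, e ≠ f ∧ s e = x ∧ r e = y) ∨ (∃ e : E, r e = u ∧ s e = x ∧ y = v)

section ColumnAddition

variable {V E : Type} {s r : E → V} {f : E} {u v : V}

theorem columnAddStep_of_gStep (hsf : s f = u) (hrf : r f = v)
    (hloop : ∃ e : E, s e = u ∧ r e = u) {x y : V} (h : gStep s r x y) :
    columnAddStep s r f u v x y := by
  obtain ⟨e, rfl, rfl⟩ := h
  by_cases he : e = f
  · subst he
    obtain ⟨g, hsg, hrg⟩ := hloop
    exact Or.inr ⟨g, hrg, hsg.trans hsf.symm, hrf⟩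
  · exact Or.inl ⟨e, he, rfl, rfl⟩

theorem reflTransGen_gStep_of_columnAddStep (hsf : s f = u) (hrf : r f = v) {x y : V}
    (h : columnAddStep s r f u v x y) : Relation.ReflTransGen (gStep s r) x y := by
  rcases h with ⟨e, -, hse, hre⟩ | ⟨e, hre, hse, rfl⟩
  · exact .single ⟨e, hse, hre⟩
  · exact (Relation.ReflTransGen.single ⟨e, hse, hre⟩).tail ⟨f, hsf, hrf⟩

theorem reflTransGen_gStep_iff_columnAddStep (hsf : s f = u) (hrf : r f = v)
    (hloop : ∃ e : E, s e = u ∧ r e = u) {w w' : V} :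
    Relation.ReflTransGen (gStep s r) w w' ↔
      Relation.ReflTransGen (columnAddStep s r f u v) w w' :=
  ⟨Relation.ReflTransGen.mono (fun _ _ ↦ columnAddStep_of_gStep hsf hrf hloop) w w',
    Relation.reflTransGen_closed (fun _ _ ↦ reflTransGen_gStep_of_columnAddStep hsf hrf) w w'⟩

end ColumnAddition

theorem stmt_12_general (V E : Type) (s r : E → V)
    (u v : V) (f : E) (hsf : s f = u) (hrf : r f = v)
    (hloop : ∃ e : E, s e = u ∧ r e = u) (w w' : V) :
    Relation.ReflTransGen (gStep s r) w w' ↔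
      Relation.ReflTransGen
        (fun x y =>
          (∃ e : E, e ≠ f ∧ s e = x ∧ r e = y) ∨
          (∃ e : E, r e = u ∧ s e = x ∧ y = v)) w w' :=
  reflTransGen_gStep_iff_columnAddStep hsf hrf hloop

/-- Column addition preserves reachability: let `E` be a graph with finitely
many vertices, `u ≠ v` with an edge `f` from `u` to `v`, and suppose `u`
supports a loop.  Form `F` by removing `f` and adding, for each edge `e` into
`u`, a new edge `ē` from `s(e)` to `v`.  Then for all `w, w'` there is a path
(possibly empty) from `w` to `w'` in `E` iff there is one in `F`. -/
theorem stmt_12 (V E : Type) [Fintype V] (s r : E → V)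
    (u v : V) (huv : u ≠ v) (f : E) (hsf : s f = u) (hrf : r f = v)
    (hloop : ∃ e : E, s e = u ∧ r e = u) (w w' : V) :
    Relation.ReflTransGen (gStep s r) w w' ↔
      Relation.ReflTransGen
        (fun x y =>
          (∃ e : E, e ≠ f ∧ s e = x ∧ r e = y) ∨
          (∃ e : E, r e = u ∧ s e = x ∧ y = v)) w w' :=
  stmt_12_general V E s r u v f hsf hrf hloop w w'
end

section
/- Let E be a directed graph with finitely many vertices, let u and v be distinct vertices in the same strongly connected component γ₀ such that there is an edge from u to v and u emits at least two edges into γ₀. Let F be the graph obtained from E by removing one fixed edge f from u to v and adding, for each edge e with range u, a new edge ē from s(e) to v. Then for all vertices w, w' there is a path from w to w' in E if and only if there is a path from w to w' in F. -/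
namespace gStep

open Relation

variable {V E : Type} (s r : E → V) (f : E)

def avoiding : V → V → Prop :=
  fun x y => ∃ e : E, e ≠ f ∧ s e = x ∧ r e = y

/-- The graph `F` of column addition, with `u = s f` and `v = r f`. -/
def colAdd : V → V → Prop :=
  fun x y => avoiding s r f x y ∨ ∃ e : E, r e = s f ∧ s e = x ∧ y = r f

variable {s r f}

theorem avoiding_le : avoiding s r f ≤ gStep s r :=
  fun _ _ ⟨e, _, hse, hre⟩ => ⟨e, hse, hre⟩

theorem avoiding_le_colAdd : avoiding s r f ≤ colAdd s r f :=
  fun _ _ => Or.inl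

/-- Cutting a path at its first use of `f`. -/
theorem reflTransGen_avoiding_or_of_reflTransGen {x y : V} (h : ReflTransGen (gStep s r) x y) :
    ReflTransGen (avoiding s r f) x y ∨ ReflTransGen (avoiding s r f) x (s f) := by
  induction h with
  | refl => exact Or.inl .refl
  | tail _ hstep ih =>
    obtain ⟨e, rfl, rfl⟩ := hstep
    rcases ih with ih | ih
    · by_cases hef : e = f
      · exact Or.inr (hef ▸ ih)
      · exact Or.inl (ih.tail ⟨e, hef, rfl, rfl⟩)
    · exact Or.inr ih

theorem reflTransGen_avoiding_of_reflTransGen_source {x : V}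
    (h : ReflTransGen (gStep s r) x (s f)) : ReflTransGen (avoiding s r f) x (s f) :=
  (reflTransGen_avoiding_or_of_reflTransGen h).elim id id

theorem reflTransGen_colAdd_source_range {g : E} (hgf : g ≠ f) (hgs : s g = s f)
    (hg : ReflTransGen (gStep s r) (r g) (s f)) :
    ReflTransGen (colAdd s r f) (s f) (r f) := by
  rcases (reflTransGen_avoiding_of_reflTransGen_source hg).cases_tail with
    hgu | ⟨b, hb, e, -, rfl, hre⟩
  · exact .single (Or.inr ⟨g, hgu.symm, hgs, rfl⟩)
  · have hfirst : colAdd s r f (s f) (r g) := Or.inl ⟨g, hgf, hgs, rfl⟩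
    exact ((ReflTransGen.mono avoiding_le_colAdd _ _ hb).head hfirst).tail
      (Or.inr ⟨e, hre, rfl, rfl⟩)

theorem colAdd_le_reflTransGen : colAdd s r f ≤ ReflTransGen (gStep s r) := by
  rintro x y (h | ⟨e, hre, rfl, rfl⟩)
  · exact .single (avoiding_le _ _ h)
  · exact (ReflTransGen.single ⟨e, rfl, hre⟩).tail ⟨f, rfl, rfl⟩

theorem reflTransGen_colAdd_iff {g : E} (hgf : g ≠ f) (hgs : s g = s f)
    (hg : ReflTransGen (gStep s r) (r g) (s f)) {x y : V} :
    ReflTransGen (colAdd s r f) x y ↔ ReflTransGen (gStep s r) x y := by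
  refine ⟨fun h => reflTransGen_closed colAdd_le_reflTransGen _ _ h,
    fun h => reflTransGen_closed ?_ _ _ h⟩
  rintro _ _ ⟨e, rfl, rfl⟩
  by_cases hef : e = f
  · subst hef
    exact reflTransGen_colAdd_source_range hgf hgs hg
  · exact .single (Or.inl ⟨e, hef, rfl, rfl⟩)

end gStep

theorem stmt_13_general (V E : Type) (s r : E → V)
    (u v : V) (f : E) (hsf : s f = u) (hrf : r f = v)
    (htwo : ∃ e₁ e₂ : E, e₁ ≠ e₂ ∧ s e₁ = u ∧ s e₂ = u ∧
      (Relation.TransGen (gStep s r) u (r e₁) ∧ Relation.TransGen (gStep s r) (r e₁) u) ∧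
      (Relation.TransGen (gStep s r) u (r e₂) ∧ Relation.TransGen (gStep s r) (r e₂) u))
    (w w' : V) :
    Relation.ReflTransGen (gStep s r) w w' ↔
      Relation.ReflTransGen
        (fun x y =>
          (∃ e : E, e ≠ f ∧ s e = x ∧ r e = y) ∨
          (∃ e : E, r e = u ∧ s e = x ∧ y = v)) w w' := by
  subst hsf hrf
  obtain ⟨g, hgf, hgs, hg⟩ : ∃ g : E, g ≠ f ∧ s g = s f ∧
      Relation.TransGen (gStep s r) (r g) (s f) := by
    obtain ⟨e₁, e₂, hne, hs₁, hs₂, ⟨-, h₁⟩, ⟨-, h₂⟩⟩ := htwo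
    rcases eq_or_ne e₁ f with rfl | h
    · exact ⟨e₂, hne.symm, hs₂, h₂⟩
    · exact ⟨e₁, h, hs₁, h₁⟩
  exact (gStep.reflTransGen_colAdd_iff hgf hgs hg.to_reflTransGen).symm

/-- Column addition preserves reachability: let `E` be a graph with finitely
many vertices, `u ≠ v` in the same strongly connected component (mutually
connected by nonempty paths) with an edge `f` from `u` to `v`, and suppose `u`
emits at least two edges into that component.  Form `F` by removing `f` and
adding, for each edge `e` into `u`, a new edge `ē` from `s(e)` to `v`.  Then
for all `w, w'` there is a path from `w` to `w'` in `E` iff there is one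
in `F`. -/
theorem stmt_13 (V E : Type) [Fintype V] (s r : E → V)
    (u v : V) (huv : u ≠ v) (f : E) (hsf : s f = u) (hrf : r f = v)
    (hcomp : Relation.TransGen (gStep s r) u v ∧ Relation.TransGen (gStep s r) v u)
    (htwo : ∃ e₁ e₂ : E, e₁ ≠ e₂ ∧ s e₁ = u ∧ s e₂ = u ∧
      (Relation.TransGen (gStep s r) u (r e₁) ∧ Relation.TransGen (gStep s r) (r e₁) u) ∧
      (Relation.TransGen (gStep s r) u (r e₂) ∧ Relation.TransGen (gStep s r) (r e₂) u))
    (w w' : V) :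
    Relation.ReflTransGen (gStep s r) w w' ↔
      Relation.ReflTransGen
        (fun x y =>
          (∃ e : E, e ≠ f ∧ s e = x ∧ r e = y) ∨
          (∃ e : E, r e = u ∧ s e = x ∧ y = v)) w w' :=
  stmt_13_general V E s r u v f hsf hrf htwo w w'
end

section
/- Let E be a finite directed graph whose vertices all lie in one strongly connected component which is not a single cycle (i.e., some vertex supports two distinct return paths). Then by a finite sequence of legal column additions on B_E = A_E − I (each adding column u to column v where there is an edge from u to v, or where u supports a loop) one obtains a graph E' on the same vertex set such that every vertex of E' supports at least two loops and for every ordered pair of vertices (u,v) there is at least one edge from u to v; moreover each intermediate graph remains strongly connected. -/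
/-!
Call a vertex *branching* if it has out-degree at least `2`. If `b` is branching and
`b → c → ⋯ → q → b` is a return path at `b`, adding column `b` into column `c` keeps the
graph strongly connected (the edge `b → c` only disappears when `b` has another out-edge)
and replaces the edge `b → c` by an edge `q → c`, so `q` is branching and supports the
shorter return path `q → c → ⋯ → q`. Iterating produces a loop. Once a vertex `d` has a
loop, adding column `d` into any other column only increases entries, so strong
connectivity is automatic; pulling loops backwards along paths puts a loop at every vertex,
pulling edges forwards along paths then makes every entry positive, and one more addition
per column raises every diagonal entry to `2`.
-/

open Relation

namespace ColumnAddition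

section RelPath

variable {α : Type*}

inductive RelPath (r : α → α → Prop) : ℕ → α → α → Prop
  | refl (a : α) : RelPath r 0 a a
  | head {n : ℕ} {a b c : α} : r a b → RelPath r n b c → RelPath r (n + 1) a c

variable {r s : α → α → Prop}

theorem RelPath.mono (hrs : ∀ a b, r a b → s a b) {n : ℕ} {a b : α}
    (h : RelPath r n a b) : RelPath s n a b := by
  induction h with
  | refl a => exact .refl a
  | head hab _ ih => exact .head (hrs _ _ hab) ih

theorem RelPath.reflTransGen {n : ℕ} {a b : α} (h : RelPath r n a b) : ReflTransGen r a b := by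
  induction h with
  | refl => exact .refl
  | head hab _ ih => exact .head hab ih

theorem _root_.Relation.ReflTransGen.exists_relPath {a b : α} (h : ReflTransGen r a b) :
    ∃ n, RelPath r n a b := by
  induction h using ReflTransGen.head_induction_on with
  | refl => exact ⟨0, .refl b⟩
  | head hac _ ih => obtain ⟨n, hn⟩ := ih; exact ⟨n + 1, .head hac hn⟩

theorem RelPath.exists_lt_avoiding {n : ℕ} {a b : α} (h : RelPath r n a b) (hab : a ≠ b) :
    ∃ m < n, ∃ q, RelPath (fun x y => r x y ∧ x ≠ b) m a q ∧ r q b ∧ q ≠ b := by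
  induction h with
  | refl => exact absurd rfl hab
  | @head n a a' b haa' _ ih =>
    by_cases ha'b : a' = b
    · subst ha'b
      exact ⟨0, n.succ_pos, a, .refl a, haa', hab⟩
    · obtain ⟨m, hm, q, hpath, hqb⟩ := ih ha'b
      exact ⟨m + 1, by omega, q, .head ⟨haa', hab⟩ hpath, hqb⟩

end RelPath

theorem exists_reflTransGen_forall {α ι : Type*} [Fintype ι] {r : α → α → Prop}
    {I : α → Prop} {P : ι → α → Prop} (hI : ∀ x y, r x y → I x → I y)
    (hP : ∀ t x y, r x y → P t x → P t y) (h : ∀ t x, I x → ∃ y, ReflTransGen r x y ∧ P t y)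
    {x : α} (hx : I x) : ∃ y, ReflTransGen r x y ∧ I y ∧ ∀ t, P t y := by
  have preserve {Q : α → Prop} (hQ : ∀ x y, r x y → Q x → Q y) {x y : α}
      (hxy : ReflTransGen r x y) (hx : Q x) : Q y := by
    induction hxy with
    | refl => exact hx
    | tail _ hyz ih => exact hQ _ _ hyz ih
  classical
  suffices ∀ s : Finset ι, ∃ y, ReflTransGen r x y ∧ I y ∧ ∀ t ∈ s, P t y by
    obtain ⟨y, hxy, hy, hP⟩ := this Finset.univ
    exact ⟨y, hxy, hy, fun t => hP t (Finset.mem_univ t)⟩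
  intro s
  induction s using Finset.induction_on with
  | empty => exact ⟨x, .refl, hx, by simp⟩
  | insert t s _ ih =>
    obtain ⟨y, hxy, hy, hPy⟩ := ih
    obtain ⟨z, hyz, hz⟩ := h t y hy
    refine ⟨z, hxy.trans hyz, preserve hI hyz hy, fun t' ht' => ?_⟩
    rcases Finset.mem_insert.mp ht' with rfl | ht'
    · exact hz
    · exact preserve (hP t') hyz (hPy t' ht')

variable {V : Type}

def Adj (X : Matrix V V ℤ) (x y : V) : Prop := 0 < X x y

def IsStrongDigraph (X : Matrix V V ℤ) : Prop :=
  (∀ i j, 0 ≤ X i j) ∧ ∀ i j, TransGen (Adj X) i j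

namespace IsStrongDigraph

variable {X Y : Matrix V V ℤ}

theorem mono (hX : IsStrongDigraph X) (hXY : ∀ i j, X i j ≤ Y i j) : IsStrongDigraph Y :=
  ⟨fun i j => (hX.1 i j).trans (hXY i j), fun i j =>
    TransGen.mono (fun a b (hab : 0 < X a b) => hab.trans_le (hXY a b)) _ _ (hX.2 i j)⟩

variable [Fintype V]

theorem one_le_sum_row (hX : IsStrongDigraph X) (x : V) : 1 ≤ ∑ y, X x y := by
  obtain ⟨z, hxz, -⟩ := TransGen.head'_iff.mp (hX.2 x x)
  have : X x z ≤ ∑ y, X x y := Finset.single_le_sum (fun y _ => hX.1 x y) (Finset.mem_univ z)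
  have : 0 < X x z := hxz
  omega

end IsStrongDigraph

theorem exists_ne_pos_of_two_le_sum [Fintype V] {f : V → ℤ} (hf : ∀ y, 0 ≤ f y)
    (hsum : 2 ≤ ∑ y, f y) {v : V} (hv : f v ≤ 1) : ∃ w ≠ v, 0 < f w := by
  classical
  by_contra! hno
  have : ∑ y, f y = f v :=
    Finset.sum_eq_single v (fun w _ hw => le_antisymm (hno w hw) (hf w)) (by simp)
  omega

variable [DecidableEq V]

/-- Adding column `u` of `A - I` to column `v`, read off on `A`; the `-1` is the `(u, u)`
entry of `-I`. -/
def colAdd (X : Matrix V V ℤ) (u v : V) : Matrix V V ℤ :=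
  Matrix.of fun x y => if y = v then X x v + X x u - (if x = u then 1 else 0) else X x y

def LegalMove (X Y : Matrix V V ℤ) : Prop :=
  (∃ u v, u ≠ v ∧ (0 < X u v ∨ 0 < X u u) ∧ Y = colAdd X u v) ∧ IsStrongDigraph Y

def MonotoneMove (X Y : Matrix V V ℤ) : Prop :=
  LegalMove X Y ∧ ∀ i j, X i j ≤ Y i j

section colAdd

variable {u v : V}

theorem colAdd_apply_col (X : Matrix V V ℤ) (u v x : V) :
    colAdd X u v x v = X x v + X x u - (if x = u then 1 else 0) := by
  simp [colAdd]

theorem colAdd_apply_of_ne_col (X : Matrix V V ℤ) (u x : V) {y : V} (hy : y ≠ v) :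
    colAdd X u v x y = X x y := by
  simp [colAdd, hy]

theorem colAdd_apply_col_of_ne_row (X : Matrix V V ℤ) (v : V) {x : V} (hx : x ≠ u) :
    colAdd X u v x v = X x v + X x u := by
  simp [colAdd_apply_col, hx]

theorem le_colAdd_of_ne_row {X : Matrix V V ℤ} (hX : ∀ i j, 0 ≤ X i j) {x : V} (hx : x ≠ u)
    (y : V) :
    X x y ≤ colAdd X u v x y := by
  by_cases hy : y = v
  · subst hy; rw [colAdd_apply_col_of_ne_row X y hx]; linarith [hX x u]
  · rw [colAdd_apply_of_ne_col X u x hy]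

theorem le_colAdd {X : Matrix V V ℤ} (hX : ∀ i j, 0 ≤ X i j) (hu : 0 < X u u) (x y : V) :
    X x y ≤ colAdd X u v x y := by
  by_cases hx : x = u
  · subst hx
    by_cases hy : y = v
    · subst hy; rw [colAdd_apply_col, if_pos rfl]; omega
    · rw [colAdd_apply_of_ne_col X x x hy]
  · exact le_colAdd_of_ne_row hX hx y

theorem colAdd_nonneg {X : Matrix V V ℤ} (hX : ∀ i j, 0 ≤ X i j)
    (hleg : 0 < X u v ∨ 0 < X u u) (x y : V) :
    0 ≤ colAdd X u v x y := by
  by_cases hx : x = u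
  · subst hx
    by_cases hy : y = v
    · subst hy; rw [colAdd_apply_col, if_pos rfl]; have := hX x y; have := hX x x; omega
    · rw [colAdd_apply_of_ne_col X x x hy]; exact hX x y
  · exact (hX x y).trans (le_colAdd_of_ne_row hX hx y)

theorem adj_colAdd_of_ne {X : Matrix V V ℤ} (hX : ∀ i j, 0 ≤ X i j) {x y : V}
    (hxy : Adj X x y) (hne : x ≠ u ∨ y ≠ v) : Adj (colAdd X u v) x y := by
  rcases hne with hx | hy
  · exact lt_of_lt_of_le hxy (le_colAdd_of_ne_row hX hx y)
  · show 0 < colAdd X u v x y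
    rwa [colAdd_apply_of_ne_col X u x hy]

theorem sum_colAdd_row_of_ne [Fintype V] (X : Matrix V V ℤ) (v : V) {x : V} (hx : x ≠ u) :
    ∑ y, colAdd X u v x y = ∑ y, X x y + X x u := by
  have hrow : ∀ y, colAdd X u v x y = X x y + if y = v then X x u else 0 := by
    intro y
    by_cases hy : y = v
    · subst hy; rw [colAdd_apply_col_of_ne_row X y hx, if_pos rfl]
    · rw [colAdd_apply_of_ne_col X u x hy, if_neg hy, add_zero]
  simp only [hrow, Finset.sum_add_distrib, Finset.sum_ite_eq', Finset.mem_univ, if_true]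

end colAdd

/-- If the edge `u → v` disappears, `u` has another out-neighbour `w`, and a path from `w`
that stops at its first visit to `u` ends with an edge `q → u`, which became an edge `q → v`. -/
theorem isStrongDigraph_colAdd [Fintype V] {X : Matrix V V ℤ} {u v : V}
    (hX : IsStrongDigraph X) (huv : u ≠ v) (hleg : 0 < X u v ∨ 0 < X u u)
    (hdeg : 2 ≤ ∑ y, X u y) : IsStrongDigraph (colAdd X u v) := by
  have huv_path : 0 < X u v → TransGen (Adj (colAdd X u v)) u v := by
    intro hXuv
    by_cases hYuv : 0 < colAdd X u v u v
    · exact .single hYuv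
    have hcol := colAdd_apply_col X u v u
    rw [if_pos rfl] at hcol
    have huu : X u u = 0 := by have := hX.1 u u; omega
    obtain ⟨w, hwv, huw⟩ := exists_ne_pos_of_two_le_sum (hX.1 u) hdeg (v := v) (by omega)
    have hwu : w ≠ u := by rintro rfl; omega
    obtain ⟨n, hwu_path⟩ := (hX.2 w u).to_reflTransGen.exists_relPath
    obtain ⟨_, _, q, hwq, hqu, hqu_ne⟩ := hwu_path.exists_lt_avoiding hwu
    have hwq' : ReflTransGen (Adj (colAdd X u v)) w q :=
      (hwq.mono fun _ _ ⟨hxy, hxu⟩ => adj_colAdd_of_ne hX.1 hxy (.inl hxu)).reflTransGen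
    have hqv : Adj (colAdd X u v) q v := by
      show 0 < colAdd X u v q v
      rw [colAdd_apply_col_of_ne_row X v hqu_ne]; have := hX.1 q v; have : 0 < X q u := hqu
      omega
    exact .head' (adj_colAdd_of_ne hX.1 huw (.inr hwv)) (hwq'.tail hqv)
  refine ⟨colAdd_nonneg hX.1 hleg, fun i j => TransGen.closed (fun x y hxy => ?_) _ _ (hX.2 i j)⟩
  by_cases hxy' : x = u ∧ y = v
  · obtain ⟨rfl, rfl⟩ := hxy'; exact huv_path hxy
  · exact .single (adj_colAdd_of_ne hX.1 hxy (not_and_or.mp hxy'))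

theorem monotoneMove_colAdd {X : Matrix V V ℤ} {u v : V} (hX : IsStrongDigraph X)
    (hu : 0 < X u u) (huv : u ≠ v) : MonotoneMove X (colAdd X u v) :=
  have hle := le_colAdd hX.1 hu
  ⟨⟨⟨u, v, huv, .inr hu, rfl⟩, hX.mono hle⟩, hle⟩

section Moves

variable {X Y : Matrix V V ℤ}

theorem isStrongDigraph_of_reflTransGen (h : ReflTransGen LegalMove X Y)
    (hX : IsStrongDigraph X) : IsStrongDigraph Y := by
  rcases h.cases_tail with rfl | ⟨_, _, hY⟩
  exacts [hX, hY.2]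

theorem reflTransGen_legalMove_of_monotoneMove (h : ReflTransGen MonotoneMove X Y) :
    ReflTransGen LegalMove X Y :=
  ReflTransGen.mono (fun _ _ hXY => hXY.1) _ _ h

theorem le_of_reflTransGen_monotoneMove (h : ReflTransGen MonotoneMove X Y) (i j : V) :
    X i j ≤ Y i j := by
  induction h with
  | refl => exact le_rfl
  | tail _ hYZ ih => exact ih.trans (hYZ.2 i j)

end Moves

theorem exists_loop_of_relPath [Fintype V] (m : ℕ) (X : Matrix V V ℤ) (b c : V)
    (hX : IsStrongDigraph X) (hb : 2 ≤ ∑ y, X b y) (hbc : 0 < X b c) (hcb : RelPath (Adj X) m c b) :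
    ∃ Y, ReflTransGen LegalMove X Y ∧ IsStrongDigraph Y ∧ ∃ w, 0 < Y w w := by
  induction m using Nat.strong_induction_on generalizing X b c with
  | _ m ih =>
  by_cases hbb : 0 < X b b
  · exact ⟨X, .refl, hX, b, hbb⟩
  have hcb_ne : c ≠ b := by rintro rfl; exact hbb hbc
  obtain ⟨j, hjm, q, hcq, hqb, hqb_ne⟩ := hcb.exists_lt_avoiding hcb_ne
  have hmove : LegalMove X (colAdd X b c) :=
    ⟨⟨b, c, hcb_ne.symm, .inl hbc, rfl⟩, isStrongDigraph_colAdd hX hcb_ne.symm (.inl hbc) hb⟩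
  have hqc : 0 < colAdd X b c q c := by
    rw [colAdd_apply_col_of_ne_row X c hqb_ne]
    have := hX.1 q c; have : 0 < X q b := hqb; omega
  have hq : 2 ≤ ∑ y, colAdd X b c q y := by
    rw [sum_colAdd_row_of_ne X c hqb_ne]
    have := hX.one_le_sum_row q; have : 0 < X q b := hqb; omega
  have hcq' : RelPath (Adj (colAdd X b c)) j c q :=
    hcq.mono fun _ _ ⟨hxy, hxb⟩ => adj_colAdd_of_ne hX.1 hxy (.inl hxb)
  obtain ⟨Y, hXY, hY, hloop⟩ := ih j hjm (colAdd X b c) q c hmove.2 hq hqc hcq'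
  exact ⟨Y, .head hmove hXY, hY, hloop⟩

theorem exists_loop [Fintype V] {X : Matrix V V ℤ} {b : V} (hX : IsStrongDigraph X)
    (hb : 2 ≤ ∑ y, X b y) :
    ∃ Y, ReflTransGen LegalMove X Y ∧ IsStrongDigraph Y ∧ ∃ w, 0 < Y w w := by
  obtain ⟨c, hbc, hcb⟩ := TransGen.head'_iff.mp (hX.2 b b)
  obtain ⟨m, hcb⟩ := hcb.exists_relPath
  exact exists_loop_of_relPath m X b c hX hb hbc hcb

section Monotone

variable {X : Matrix V V ℤ}

theorem exists_loop_at (hX : IsStrongDigraph X) {w : V} (hw : 0 < X w w) (x : V) :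
    ∃ Y, ReflTransGen MonotoneMove X Y ∧ 0 < Y x x := by
  induction (hX.2 x w).to_reflTransGen using ReflTransGen.head_induction_on with
  | refl => exact ⟨X, .refl, hw⟩
  | @head x d hxd _ ih =>
    obtain ⟨Y, hXY, hd⟩ := ih
    by_cases hxd_eq : x = d
    · subst hxd_eq; exact ⟨Y, hXY, hd⟩
    have hY := isStrongDigraph_of_reflTransGen (reflTransGen_legalMove_of_monotoneMove hXY) hX
    refine ⟨colAdd Y d x, hXY.tail (monotoneMove_colAdd hY hd (Ne.symm hxd_eq)), ?_⟩
    rw [colAdd_apply_col_of_ne_row Y x hxd_eq]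
    have := le_of_reflTransGen_monotoneMove hXY x d; have := hY.1 x x; have : 0 < X x d := hxd
    omega

theorem exists_pos_apply (hX : IsStrongDigraph X) (hloops : ∀ i, 0 < X i i) {a v : V}
    (hav : TransGen (Adj X) a v) : ∃ Y, ReflTransGen MonotoneMove X Y ∧ 0 < Y a v := by
  induction hav with
  | single hav => exact ⟨X, .refl, hav⟩
  | @tail p v _ hpv ih =>
    obtain ⟨Y, hXY, hap⟩ := ih
    by_cases hpv_eq : p = v
    · subst hpv_eq; exact ⟨Y, hXY, hap⟩
    have hY := isStrongDigraph_of_reflTransGen (reflTransGen_legalMove_of_monotoneMove hXY) hX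
    have hXY_le := le_of_reflTransGen_monotoneMove hXY
    have hpp : 0 < Y p p := (hloops p).trans_le (hXY_le p p)
    refine ⟨colAdd Y p v, hXY.tail (monotoneMove_colAdd hY hpp hpv_eq), ?_⟩
    rw [colAdd_apply_col]
    have := hY.1 a v; have := hXY_le p v; have : 0 < X p v := hpv
    split_ifs with hap_eq
    · subst hap_eq; omega
    · omega

variable [Fintype V]

theorem exists_loops (hX : IsStrongDigraph X) {w : V} (hw : 0 < X w w) :
    ∃ Y, ReflTransGen MonotoneMove X Y ∧ IsStrongDigraph Y ∧ ∀ x, 0 < Y x x := by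
  obtain ⟨Y, hXY, ⟨hY, -⟩, hloops⟩ :=
    exists_reflTransGen_forall (I := fun Y => IsStrongDigraph Y ∧ ∃ w, 0 < Y w w)
      (P := fun x Y => 0 < Y x x)
      (fun _ _ hYZ ⟨_, w, hw⟩ => ⟨hYZ.1.2, w, hw.trans_le (hYZ.2 w w)⟩)
      (fun x _ _ hYZ hx => hx.trans_le (hYZ.2 x x))
      (fun x _ ⟨hY, _, hw⟩ => exists_loop_at hY hw x) ⟨hX, w, hw⟩
  exact ⟨Y, hXY, hY, hloops⟩

theorem exists_pos (hX : IsStrongDigraph X) (hloops : ∀ i, 0 < X i i) :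
    ∃ Y, ReflTransGen MonotoneMove X Y ∧ IsStrongDigraph Y ∧ ∀ i j, 0 < Y i j := by
  obtain ⟨Y, hXY, ⟨hY, -⟩, hpos⟩ :=
    exists_reflTransGen_forall (I := fun Y => IsStrongDigraph Y ∧ ∀ i, 0 < Y i i)
      (P := fun (t : V × V) Y => 0 < Y t.1 t.2)
      (fun _ _ hYZ ⟨_, hloops⟩ => ⟨hYZ.1.2, fun i => (hloops i).trans_le (hYZ.2 i i)⟩)
      (fun t _ _ hYZ ht => ht.trans_le (hYZ.2 t.1 t.2))
      (fun t _ ⟨hY, hloops⟩ => exists_pos_apply hY hloops (hY.2 t.1 t.2)) ⟨hX, hloops⟩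
  exact ⟨Y, hXY, hY, fun i j => hpos (i, j)⟩

theorem exists_two_le_diag [Nontrivial V] (hX : IsStrongDigraph X) (hpos : ∀ i j, 0 < X i j) :
    ∃ Y, ReflTransGen MonotoneMove X Y ∧ (∀ i j, 0 < Y i j) ∧ ∀ i, 2 ≤ Y i i := by
  have hstep (v : V) (Y : Matrix V V ℤ) (hY : IsStrongDigraph Y ∧ ∀ i j, 0 < Y i j) :
      ∃ Z, ReflTransGen MonotoneMove Y Z ∧ 2 ≤ Z v v := by
    obtain ⟨u, hu⟩ := exists_ne v
    refine ⟨colAdd Y u v, .single (monotoneMove_colAdd hY.1 (hY.2 u u) hu), ?_⟩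
    rw [colAdd_apply_col_of_ne_row Y v hu.symm]
    have := hY.2 v v; have := hY.2 v u; omega
  obtain ⟨Y, hXY, ⟨-, hpos⟩, hdiag⟩ :=
    exists_reflTransGen_forall (I := fun Y => IsStrongDigraph Y ∧ ∀ i j, 0 < Y i j)
      (P := fun v Y => 2 ≤ Y v v)
      (fun _ _ hYZ ⟨_, hpos⟩ => ⟨hYZ.1.2, fun i j => (hpos i j).trans_le (hYZ.2 i j)⟩)
      (fun v _ _ hYZ hv => hv.trans (hYZ.2 v v)) hstep ⟨hX, hpos⟩
  exact ⟨Y, hXY, hpos, hdiag⟩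

end Monotone

end ColumnAddition

open ColumnAddition in
theorem stmt_14_general (V : Type) [Fintype V] [DecidableEq V]
    (A : Matrix V V ℤ) (hpos : ∀ i j, 0 ≤ A i j)
    (hsc : ∀ i j : V, Relation.TransGen (fun x y => 0 < A x y) i j)
    (hnotcycle : ∃ u : V, 2 ≤ ∑ j : V, A u j) :
    ∃ A' : Matrix V V ℤ,
      Relation.ReflTransGen
        (fun X Y =>
          (∃ u v : V, u ≠ v ∧ (0 < X u v ∨ 0 < X u u) ∧
            Y = Matrix.of fun x y =>
              if y = v then X x v + X x u - (if x = u then 1 else 0) else X x y) ∧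
          (∀ i j, 0 ≤ Y i j) ∧
          (∀ i j : V, Relation.TransGen (fun x y => 0 < Y x y) i j))
        A A' ∧
      (∀ i : V, 2 ≤ A' i i) ∧ (∀ i j : V, 1 ≤ A' i j) := by
  obtain ⟨u, hu⟩ := hnotcycle
  rcases subsingleton_or_nontrivial V with hV | hV
  · rw [Fintype.sum_subsingleton _ u] at hu
    refine ⟨A, .refl, fun i => ?_, fun i j => ?_⟩
    · rwa [Subsingleton.elim i u]
    · rw [Subsingleton.elim i u, Subsingleton.elim j u]; omega
  obtain ⟨Y₁, hAY₁, hY₁, w, hw⟩ := exists_loop ⟨hpos, hsc⟩ hu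
  obtain ⟨Y₂, hY₁Y₂, hY₂, hloops⟩ := exists_loops hY₁ hw
  obtain ⟨Y₃, hY₂Y₃, hY₃, hpos₃⟩ := exists_pos hY₂ hloops
  obtain ⟨Y₄, hY₃Y₄, hpos₄, hdiag⟩ := exists_two_le_diag hY₃ hpos₃
  exact ⟨Y₄, hAY₁.trans (reflTransGen_legalMove_of_monotoneMove (hY₁Y₂.trans (hY₂Y₃.trans hY₃Y₄))),
    hdiag, fun i j => hpos₄ i j⟩

/-- Let `A` be the adjacency matrix of a finite graph all of whose vertices lie
in one strongly connected component which is not a single cycle (some vertex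
has out-degree at least `2`, equivalently supports two distinct return paths).
Then a finite sequence of legal column additions on `B = A - I` (adding column
`u` into column `v` when there is an edge from `u` to `v` or `u` supports a
loop), with every intermediate graph strongly connected with nonnegative
adjacency matrix, leads to a graph `A'` in which every vertex supports at
least two loops and every ordered pair of vertices is joined by an edge. -/
theorem stmt_14 (V : Type) [Fintype V] [DecidableEq V] [Nonempty V]
    (A : Matrix V V ℤ) (hpos : ∀ i j, 0 ≤ A i j)
    (hsc : ∀ i j : V, Relation.TransGen (fun x y => 0 < A x y) i j)
    (hnotcycle : ∃ u : V, 2 ≤ ∑ j : V, A u j) :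
    ∃ A' : Matrix V V ℤ,
      Relation.ReflTransGen
        (fun X Y =>
          (∃ u v : V, u ≠ v ∧ (0 < X u v ∨ 0 < X u u) ∧
            Y = Matrix.of fun x y =>
              if y = v then X x v + X x u - (if x = u then 1 else 0) else X x y) ∧
          (∀ i j, 0 ≤ Y i j) ∧
          (∀ i j : V, Relation.TransGen (fun x y => 0 < Y x y) i j))
        A A' ∧
      (∀ i : V, 2 ≤ A' i i) ∧ (∀ i j : V, 1 ≤ A' i j) :=
  stmt_14_general V A hpos hsc hnotcycle
end

section
/- Let E be a directed graph with finitely many vertices. The map η ↦ closure of the hereditary set generated by the union of η (that is, η ↦ saturation of H(∪η)) is an order isomorphism from the lattice of hereditary subsets of the component poset Γ_E (ordered by inclusion) onto the lattice of saturated hereditary subsets of E⁰ (ordered by inclusion). -/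
/-- `u ≥ v`: there is a (possibly empty) path from `u` to `v`. -/
def gReach {V E : Type} (s r : E → V) : V → V → Prop :=
  Relation.ReflTransGen (gStep s r)

/-- A hereditary subset of vertices: closed under `≥`-successors. -/
def gHereditary {V E : Type} (s r : E → V) (H : Set V) : Prop :=
  ∀ u ∈ H, ∀ v : V, gReach s r u v → v ∈ H

/-- A regular vertex: it emits finitely many and at least one edge. -/
def gRegular {V E : Type} (s r : E → V) (v : V) : Prop :=
  {e : E | s e = v}.Finite ∧ {e : E | s e = v}.Nonempty

/-- A saturated subset of vertices: every regular vertex all of whose outgoing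
edges end in `H` belongs to `H`. -/
def gSaturated {V E : Type} (s r : E → V) (H : Set V) : Prop :=
  ∀ v : V, gRegular s r v → (∀ e : E, s e = v → r e ∈ H) → v ∈ H

/-- The hereditary subset `H(S)` generated by `S`. -/
def gHer {V E : Type} (s r : E → V) (S : Set V) : Set V :=
  {v : V | ∃ u ∈ S, gReach s r u v}

/-- The saturation of a set: the smallest saturated set containing it. -/
def gSat {V E : Type} (s r : E → V) (S : Set V) : Set V :=
  ⋂₀ {H : Set V | gSaturated s r H ∧ S ⊆ H}

/-- A strongly connected set: nonempty, and any two of its vertices are joined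
by a nonempty path. -/
def gStronglyConnectedSet {V E : Type} (s r : E → V) (S : Set V) : Prop :=
  S.Nonempty ∧ ∀ u ∈ S, ∀ v ∈ S, Relation.TransGen (gStep s r) u v

/-- A maximal strongly connected set. -/
def gMaxSCC {V E : Type} (s r : E → V) (S : Set V) : Prop :=
  gStronglyConnectedSet s r S ∧
    ∀ T : Set V, gStronglyConnectedSet s r T → S ⊆ T → S = T

/-- The components `Γ_E`: all maximal strongly connected sets together with the
singletons of singular vertices not based on a cycle. -/
def gGamma {V E : Type} (s r : E → V) : Set (Set V) :=
  {S | gMaxSCC s r S} ∪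
    {S | ∃ v : V, S = {v} ∧ ¬ gRegular s r v ∧ ¬ Relation.TransGen (gStep s r) v v}

/-- The order on components: `γ₁ ≥ γ₂` iff some vertex of `γ₁` reaches some
vertex of `γ₂`. -/
def gGammaGE {V E : Type} (s r : E → V) (γ₁ γ₂ : Set V) : Prop :=
  ∃ v₁ ∈ γ₁, ∃ v₂ ∈ γ₂, gReach s r v₁ v₂

/-- A hereditary subset of the component poset `Γ_E`. -/
def gGammaHereditary {V E : Type} (s r : E → V) (σ : Set (Set V)) : Prop :=
  ∀ γ₁ ∈ σ, ∀ γ₂ ∈ gGamma s r, gGammaGE s r γ₁ γ₂ → γ₂ ∈ σ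

/-- The map `η ↦ saturation of H(∪η)` from subsets of `Γ_E` to subsets of
`E⁰`. -/
def gPhi {V E : Type} (s r : E → V) (σ : Set (Set V)) : Set V :=
  gSat s r (gHer s r (⋃₀ σ))

/-
A saturated hereditary set `H` is recovered from the components it contains. Every singular or
cyclic vertex of `H` lies in a component inside `H`. Conversely, a vertex of `H` outside the
saturation `X` of what these components generate is regular, and since `X` is saturated it has
an edge to another such vertex; in a finite graph this forces a cycle among those vertices,
which is absurd. Injectivity and monotonicity reflect the fact that saturating a hereditary set
adds only regular vertices that lie on no cycle, so it adds no vertex of any component.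
-/

open Relation

/-- Otherwise reversed reachability inside `B` is a strict order on a finite type, hence
well-founded, and a minimal element of `B` has no successor in `B`. -/
theorem exists_transGen_self_of_forall_exists_mem {α : Type*} [Finite α] {R : α → α → Prop}
    {B : Set α} (hB : B.Nonempty) (h : ∀ a ∈ B, ∃ b ∈ B, R a b) :
    ∃ a ∈ B, TransGen R a a := by
  by_contra! hacyc
  let Q : α → α → Prop := fun a b => b ∈ B ∧ TransGen R b a
  have : IsTrans α Q := ⟨fun _ _ _ hab hbc => ⟨hbc.1, hbc.2.trans hab.2⟩⟩
  have : Std.Irrefl Q := ⟨fun a haa => hacyc a haa.1 haa.2⟩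
  obtain ⟨m, hmB, hmin⟩ := (Finite.wellFounded_of_trans_of_irrefl Q).has_min B hB
  obtain ⟨b, hbB, hmb⟩ := h m hmB
  exact hmin b hbB ⟨hmB, TransGen.single hmb⟩

section Graph

variable {V E : Type} {s r : E → V}

def gSingularOrCyclic (s r : E → V) (v : V) : Prop :=
  ¬ gRegular s r v ∨ TransGen (gStep s r) v v

def gComponentsIn (s r : E → V) (H : Set V) : Set (Set V) :=
  {γ | γ ∈ gGamma s r ∧ γ ⊆ H}

theorem subset_gHer (S : Set V) : S ⊆ gHer s r S :=
  fun v hv => ⟨v, hv, ReflTransGen.refl⟩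

theorem gHereditary_gHer (S : Set V) : gHereditary s r (gHer s r S) := by
  rintro u ⟨w, hw, hwu⟩ v huv
  exact ⟨w, hw, hwu.trans huv⟩

theorem gHer_subset {S H : Set V} (hH : gHereditary s r H) (hSH : S ⊆ H) :
    gHer s r S ⊆ H := by
  rintro v ⟨u, hu, huv⟩
  exact hH u (hSH hu) v huv

theorem gHer_mono {S T : Set V} (h : S ⊆ T) : gHer s r S ⊆ gHer s r T := by
  rintro v ⟨u, hu, huv⟩
  exact ⟨u, h hu, huv⟩

theorem subset_gSat (S : Set V) : S ⊆ gSat s r S :=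
  fun _ hv => Set.mem_sInter.2 fun _ hH => hH.2 hv

theorem gSat_subset {S H : Set V} (hH : gSaturated s r H) (hSH : S ⊆ H) :
    gSat s r S ⊆ H :=
  fun _ hv => Set.mem_sInter.1 hv H ⟨hH, hSH⟩

theorem gSaturated_gSat (S : Set V) : gSaturated s r (gSat s r S) :=
  fun v hreg h => Set.mem_sInter.2 fun H hH =>
    hH.1 v hreg fun e he => Set.mem_sInter.1 (h e he) H hH

theorem gSat_mono {S T : Set V} (h : S ⊆ T) : gSat s r S ⊆ gSat s r T :=
  gSat_subset (gSaturated_gSat T) (h.trans (subset_gSat T))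

/-- The vertices all of whose descendants lie in `gSat s r H` form a saturated set containing
`H`, hence containing `gSat s r H`. -/
theorem gHereditary_gSat {H : Set V} (hH : gHereditary s r H) :
    gHereditary s r (gSat s r H) := by
  let K : Set V := {v | ∀ w, gReach s r v w → w ∈ gSat s r H}
  have hK : gSaturated s r K := by
    intro v hreg h w hvw
    rcases hvw.cases_head with rfl | ⟨c, ⟨e, hse, rfl⟩, hcw⟩
    · exact gSaturated_gSat H _ hreg fun e he => h e he (r e) ReflTransGen.refl
    · exact h e hse w hcw
  have hHK : H ⊆ K := fun u hu w huw => subset_gSat H (hH u hu w huw)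
  exact fun u hu w huw => gSat_subset hK hHK hu w huw

/-- The regular vertices on no cycle, together with `W`, form a saturated set. -/
theorem mem_of_mem_gSat_of_gSingularOrCyclic {W : Set V} (hW : gHereditary s r W) {v : V}
    (hv : v ∈ gSat s r W) (hvc : gSingularOrCyclic s r v) : v ∈ W := by
  let Y := W ∪ {u | gRegular s r u ∧ ¬ TransGen (gStep s r) u u}
  have hY : gSaturated s r Y := by
    intro u hreg hu
    by_cases hc : TransGen (gStep s r) u u
    · obtain ⟨c, ⟨e, hse, rfl⟩, hcu⟩ := TransGen.head'_iff.1 hc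
      rcases hu e hse with hw | ⟨-, hnc⟩
      · exact Or.inl (hW _ hw u hcu)
      · exact absurd (TransGen.tail' hcu ⟨e, hse, rfl⟩) hnc
    · exact Or.inr ⟨hreg, hc⟩
  rcases gSat_subset hY Set.subset_union_left hv with hvW | ⟨hreg, hnc⟩
  · exact hvW
  · exact absurd hvc (not_or.2 ⟨not_not.2 hreg, hnc⟩)

theorem nonempty_of_mem_gGamma {γ : Set V} (hγ : γ ∈ gGamma s r) : γ.Nonempty := by
  rcases hγ with hγ | ⟨u, rfl, -, -⟩
  · exact hγ.1.1
  · exact Set.singleton_nonempty u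

theorem gSingularOrCyclic_of_mem_gGamma {γ : Set V} (hγ : γ ∈ gGamma s r) {v : V}
    (hv : v ∈ γ) : gSingularOrCyclic s r v := by
  rcases hγ with hγ | ⟨u, rfl, hreg, -⟩
  · exact Or.inr (hγ.1.2 v hv v hv)
  · exact Or.inl (hv ▸ hreg)

theorem subset_of_mem_gGamma_of_mem {γ H : Set V} (hγ : γ ∈ gGamma s r)
    (hH : gHereditary s r H) {v : V} (hv : v ∈ γ) (hvH : v ∈ H) : γ ⊆ H := by
  rcases hγ with hγ | ⟨u, rfl, -, -⟩
  · exact fun w hw => hH v hvH w (hγ.1.2 v hv w hw).to_reflTransGen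
  · rintro w rfl
    exact hv ▸ hvH

theorem exists_gMaxSCC_superset [Finite V] {S : Set V} (hS : gStronglyConnectedSet s r S) :
    ∃ T, gMaxSCC s r T ∧ S ⊆ T := by
  obtain ⟨T, ⟨hT, hST⟩, hmax⟩ := Set.Finite.exists_maximalFor id
    {T : Set V | gStronglyConnectedSet s r T ∧ S ⊆ T} (Set.toFinite _) ⟨S, hS, subset_rfl⟩
  exact ⟨T, ⟨hT, fun T' hT' hTT' => hTT'.antisymm (hmax ⟨hT', hST.trans hTT'⟩ hTT')⟩, hST⟩

/-- The strongly connected set around a cyclic vertex `v` is its class under mutual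
reachability. -/
theorem exists_mem_gGamma_of_gSingularOrCyclic [Finite V] {v : V}
    (hv : gSingularOrCyclic s r v) : ∃ γ ∈ gGamma s r, v ∈ γ := by
  by_cases hc : TransGen (gStep s r) v v
  · let S : Set V := {w | gReach s r v w ∧ gReach s r w v}
    have hS : gStronglyConnectedSet s r S := by
      refine ⟨⟨v, ReflTransGen.refl, ReflTransGen.refl⟩, ?_⟩
      rintro u ⟨-, huv⟩ w ⟨hvw, -⟩
      exact (TransGen.trans_right huv hc).trans_left hvw
    obtain ⟨T, hT, hST⟩ := exists_gMaxSCC_superset hS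
    exact ⟨T, Or.inl hT, hST ⟨ReflTransGen.refl, ReflTransGen.refl⟩⟩
  · exact ⟨{v}, Or.inr ⟨v, rfl, hv.resolve_right hc, hc⟩, rfl⟩

/-- A vertex of `H \ X` is regular with an edge back into `H \ X`, so `H \ X` contains a
cycle. -/
theorem subset_of_gSingularOrCyclic_mem [Finite V] {H X : Set V} (hH : gHereditary s r H)
    (hX : gSaturated s r X) (h : ∀ v ∈ H, gSingularOrCyclic s r v → v ∈ X) : H ⊆ X := by
  have hstep : ∀ v ∈ H \ X, ∃ w ∈ H \ X, gStep s r v w := by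
    rintro v ⟨hvH, hvX⟩
    have hreg : gRegular s r v := not_not.1 fun hreg => hvX (h v hvH (Or.inl hreg))
    by_contra! hno
    refine hvX (hX v hreg fun e he => not_not.1 fun hre => hno (r e) ⟨?_, hre⟩ ⟨e, he, rfl⟩)
    exact hH v hvH (r e) (ReflTransGen.single ⟨e, he, rfl⟩)
  by_contra hHX
  obtain ⟨v, ⟨hvH, hvX⟩, hc⟩ :=
    exists_transGen_self_of_forall_exists_mem (Set.sdiff_nonempty.2 hHX) hstep
  exact hvX (h v hvH (Or.inr hc))

theorem gHereditary_gPhi (σ : Set (Set V)) : gHereditary s r (gPhi s r σ) :=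
  gHereditary_gSat (gHereditary_gHer _)

theorem gSaturated_gPhi (σ : Set (Set V)) : gSaturated s r (gPhi s r σ) :=
  gSaturated_gSat _

theorem subset_gPhi_of_mem {σ : Set (Set V)} {γ : Set V} (hγ : γ ∈ σ) : γ ⊆ gPhi s r σ :=
  fun _ hv => subset_gSat _ (subset_gHer _ ⟨γ, hγ, hv⟩)

theorem mem_of_mem_gPhi {σ : Set (Set V)} (hσ : gGammaHereditary s r σ) {γ : Set V}
    (hγ : γ ∈ gGamma s r) {v : V} (hvγ : v ∈ γ) (hv : v ∈ gPhi s r σ) : γ ∈ σ := by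
  obtain ⟨u, ⟨γ', hγ'σ, huγ'⟩, huv⟩ := mem_of_mem_gSat_of_gSingularOrCyclic
    (gHereditary_gHer _) hv (gSingularOrCyclic_of_mem_gGamma hγ hvγ)
  exact hσ γ' hγ'σ γ hγ ⟨u, huγ', v, hvγ, huv⟩

theorem gPhi_subset_gPhi_iff {σ₁ σ₂ : Set (Set V)} (hσ₁ : σ₁ ⊆ gGamma s r)
    (hσ₂ : gGammaHereditary s r σ₂) : gPhi s r σ₁ ⊆ gPhi s r σ₂ ↔ σ₁ ⊆ σ₂ := by
  refine ⟨fun h γ hγ => ?_, fun h => gSat_mono (gHer_mono (Set.sUnion_subset_sUnion h))⟩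
  obtain ⟨v, hv⟩ := nonempty_of_mem_gGamma (hσ₁ hγ)
  exact mem_of_mem_gPhi hσ₂ (hσ₁ hγ) hv (h (subset_gPhi_of_mem hγ hv))

theorem gGammaHereditary_gComponentsIn {H : Set V} (hH : gHereditary s r H) :
    gGammaHereditary s r (gComponentsIn s r H) := by
  rintro γ₁ ⟨-, hγ₁H⟩ γ₂ hγ₂ ⟨v₁, hv₁, v₂, hv₂, hv₁₂⟩
  exact ⟨hγ₂, subset_of_mem_gGamma_of_mem hγ₂ hH hv₂ (hH v₁ (hγ₁H hv₁) v₂ hv₁₂)⟩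

theorem gPhi_gComponentsIn [Finite V] {H : Set V} (hH : gHereditary s r H)
    (hHs : gSaturated s r H) : gPhi s r (gComponentsIn s r H) = H := by
  refine (gSat_subset hHs (gHer_subset hH ?_)).antisymm
    (subset_of_gSingularOrCyclic_mem hH (gSaturated_gPhi _) fun v hvH hv => ?_)
  · rintro v ⟨γ, ⟨-, hγH⟩, hvγ⟩
    exact hγH hvγ
  · obtain ⟨γ, hγ, hvγ⟩ := exists_mem_gGamma_of_gSingularOrCyclic hv
    have hγH : γ ∈ gComponentsIn s r H := ⟨hγ, subset_of_mem_gGamma_of_mem hγ hH hvγ hvH⟩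
    exact subset_gPhi_of_mem hγH hvγ

end Graph

/-- For a graph with finitely many vertices, `η ↦ closure(H(∪η))` is an order
isomorphism from the lattice of hereditary subsets of the component poset
`Γ_E` onto the lattice of saturated hereditary subsets of `E⁰`. -/
theorem stmt_17 (V E : Type) [Fintype V] (s r : E → V) :
    (∀ σ : Set (Set V), σ ⊆ gGamma s r → gGammaHereditary s r σ →
      gHereditary s r (gPhi s r σ) ∧ gSaturated s r (gPhi s r σ)) ∧
    (∀ H : Set V, gHereditary s r H → gSaturated s r H →
      ∃ σ : Set (Set V), σ ⊆ gGamma s r ∧ gGammaHereditary s r σ ∧ gPhi s r σ = H) ∧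
    (∀ σ₁ σ₂ : Set (Set V),
      σ₁ ⊆ gGamma s r → gGammaHereditary s r σ₁ →
      σ₂ ⊆ gGamma s r → gGammaHereditary s r σ₂ →
      (σ₁ ⊆ σ₂ ↔ gPhi s r σ₁ ⊆ gPhi s r σ₂)) :=
  ⟨fun σ _ _ => ⟨gHereditary_gPhi σ, gSaturated_gPhi σ⟩,
    fun _ hH hHs => ⟨_, fun _ hγ => hγ.1, gGammaHereditary_gComponentsIn hH,
      gPhi_gComponentsIn hH hHs⟩,
    fun _ _ hσ₁ _ _ hσ₂ => (gPhi_subset_gPhi_iff hσ₁ hσ₂).symm⟩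
end

section
/- Let E be a graph with finitely many vertices and let w be a regular vertex of E that does not support a loop, and suppose E has at least one other vertex. Then the collapsed graph E_COL (obtained by removing w and replacing each pair (e,f) with r(e) = w = s(f) by a single edge [ef] from s(e) to r(f)) satisfies: for all vertices u,v ∈ E⁰ \ {w}, there is a nonempty path from u to v in E (possibly with interior occurrences of w) if and only if there is a nonempty path from u to v in E_COL; in particular u ≥ v in E iff u ≥ v in E_COL for all u,v ≠ w. -/
/-- The one-step edge relation of the graph `E_COL` obtained by collapsing the
vertex `w`: the remaining edges of `E` not touching `w`, together with an edge
`[ef]` from `s(e)` to `r(f)` for each pair `e ∈ r⁻¹(w)`, `f ∈ s⁻¹(w)`. -/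
def gStepCol {V E : Type} (s r : E → V) (w : V) : V → V → Prop :=
  fun x y =>
    (∃ e : E, s e = x ∧ r e = y ∧ s e ≠ w ∧ r e ≠ w) ∨
    (∃ e f : E, r e = w ∧ s f = w ∧ s e = x ∧ r f = y)

/-- Collapsing a regular vertex `w` not supporting a loop (in a graph with
finitely many vertices having at least one other vertex) preserves
reachability: for `u, v ≠ w` there is a nonempty path from `u` to `v` in `E`
iff there is one in `E_COL`; in particular `u ≥ v` in `E` iff `u ≥ v` in
`E_COL`. -/
theorem stmt_19 (V E : Type) [Fintype V] (s r : E → V) (w : V)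
    (hreg : {e : E | s e = w}.Finite ∧ {e : E | s e = w}.Nonempty)
    (hnoloop : ¬ ∃ e : E, s e = w ∧ r e = w)
    (hother : ∃ v : V, v ≠ w) :
    ∀ u v : V, u ≠ w → v ≠ w →
      (Relation.TransGen (gStep s r) u v ↔ Relation.TransGen (gStepCol s r w) u v) ∧
      (Relation.ReflTransGen (gStep s r) u v ↔
        Relation.ReflTransGen (gStepCol s r w) u v) := by
  have hrev : ∀ u v : V, Relation.TransGen (gStepCol s r w) u v →
      Relation.TransGen (gStep s r) u v := by
    intro u v h
    induction h with
    | single h =>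
      rcases h with ⟨e, he1, he2, _, _⟩ | ⟨e, f, hre, hsf, hse, hrf⟩
      · exact .single ⟨e, he1, he2⟩
      · exact .head ⟨e, hse, hre⟩ (.single ⟨f, hsf, hrf⟩)
    | tail _ hstep ih =>
      rcases hstep with ⟨e, he1, he2, _, _⟩ | ⟨e, f, hre, hsf, hse, hrf⟩
      · exact ih.tail ⟨e, he1, he2⟩
      · exact (ih.tail ⟨e, hse, hre⟩).tail ⟨f, hsf, hrf⟩
  have hfwd : ∀ u v : V, Relation.TransGen (gStep s r) u v → v ≠ w →
      ((u ≠ w → Relation.TransGen (gStepCol s r w) u v) ∧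
       (u = w → ∀ x : V, x ≠ w → (∃ e : E, s e = x ∧ r e = w) →
          Relation.TransGen (gStepCol s r w) x v)) := by
    intro u v h
    induction h using Relation.TransGen.head_induction_on with
    | single hstep =>
      intro hv
      obtain ⟨e, hse, hre⟩ := hstep
      constructor
      · intro hu
        exact .single (Or.inl ⟨e, hse, hre, hse ▸ hu, hre ▸ hv⟩)
      · rintro huw x hx ⟨e', hse', hre'⟩
        exact .single (Or.inr ⟨e', e, hre', hse.trans huw, hse', hre⟩)
    | @head a b hstep _ ih =>
      intro hv
      obtain ⟨e, hse, hre⟩ := hstep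
      have ih' := ih hv
      constructor
      · intro ha
        by_cases hb : b = w
        · exact ih'.2 hb a ha ⟨e, hse, hre.trans hb⟩
        · exact .head (Or.inl ⟨e, hse, hre, hse ▸ ha, hre ▸ hb⟩) (ih'.1 hb)
      · rintro haw x hx ⟨e', hse', hre'⟩
        have hb : b ≠ w := by
          intro hb
          exact hnoloop ⟨e, hse.trans haw, hre.trans hb⟩
        exact .head (Or.inr ⟨e', e, hre', hse.trans haw, hse', hre⟩) (ih'.1 hb)
  intro u v hu hv
  have h1 : Relation.TransGen (gStep s r) u v ↔ Relation.TransGen (gStepCol s r w) u v :=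
    ⟨fun h => (hfwd u v h hv).1 hu, hrev u v⟩
  refine ⟨h1, ?_⟩
  rw [Relation.reflTransGen_iff_eq_or_transGen, Relation.reflTransGen_iff_eq_or_transGen, h1]
end
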